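/- arXiv:1812.09457 — 3 statements merged into one kernel-verified Lean document; each statement's English description precedes it below -/
import Mathlib

section
/- For every integer n ≥ 3, ∫_{ℝⁿ} ((1−‖x‖²)/(1+‖x‖²)^{n+1})·log(1/(1+‖x‖²)) dx = π^{n/2}·Γ(n/2)/(n·Γ(n)); in particular this integral is strictly positive, so the constant \tilde c₁ = ((n−2)²/4) times this integral (appearing in Lemma 5.3 and Theorem 6.3) is strictly positive. (For n = 4 the integral equals π²/24 = ω₄/48 and for n = 5 it equals π³/160, consistent with the explicit constants 2√(3ω₄) and 512/(9π) computed in the proof of Theorem 6.3.) -/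
/-!
Integrating in polar coordinates and substituting `v = 1 / (1 + r²)` turns the integral into
`n ω / 2 · ∫₀¹ v^(a-1) (1-v)^(a-1) (2v-1) log v dv` with `a = n / 2` and `ω` the volume of the
unit ball. Since `d/dv [v^a (1-v)^a log v] = v^(a-1) (1-v)^a - a v^(a-1) (1-v)^(a-1) (2v-1) log v`
and the bracket vanishes at both ends, `a` times the last integral is `B(a, a + 1)`.
-/

open MeasureTheory

open Real Set intervalIntegral ProbabilityTheory

theorem integral_rpow_mul_one_sub_rpow_eq_beta {u v : ℝ} (hu : 0 < u) (hv : 0 < v) :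
    ∫ x in (0:ℝ)..1, x ^ (u - 1) * (1 - x) ^ (v - 1) = beta u v := by
  rw [beta_eq_betaIntegralReal u v hu hv, Complex.betaIntegral,
    ← Complex.ofReal_re (∫ _ in _.._, _), ← intervalIntegral.integral_ofReal]
  congr 1
  refine integral_congr fun x hx => ?_
  rw [uIcc_of_le zero_le_one] at hx
  push_cast
  rw [Complex.ofReal_cpow hx.1, Complex.ofReal_cpow (sub_nonneg.2 hx.2)]
  push_cast
  rfl

noncomputable def logBetaIntegrand (a v : ℝ) : ℝ :=
  v ^ (a - 1) * (1 - v) ^ (a - 1) * (2 * v - 1) * log v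

theorem hasDerivAt_rpow_mul_one_sub_rpow_mul_log (a : ℝ) {w : ℝ} (hw : w ∈ Ioo (0:ℝ) 1) :
    HasDerivAt (fun w => w ^ a * (1 - w) ^ a * log w)
      (w ^ (a - 1) * (1 - w) ^ (a + 1 - 1) - a * logBetaIntegrand a w) w := by
  have hw0 : w ≠ 0 := hw.1.ne'
  have hw1 : 1 - w ≠ 0 := (sub_pos.2 hw.2).ne'
  have h := (((hasDerivAt_id w).rpow_const (p := a) (Or.inl hw0)).mul
    (((hasDerivAt_id w).const_sub 1).rpow_const (p := a) (Or.inl hw1))).mul (hasDerivAt_log hw0)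
  refine h.congr_deriv ?_
  unfold logBetaIntegrand
  rw [add_sub_cancel_right]
  have hwa : w ^ a = w ^ (a - 1) * w := by rw [← rpow_add_one hw0, sub_add_cancel]
  have hwa' : (1 - w) ^ a = (1 - w) ^ (a - 1) * (1 - w) := by
    rw [← rpow_add_one hw1, sub_add_cancel]
  simp only [id, Pi.mul_apply, hwa, hwa']
  field_simp
  ring

theorem continuousOn_rpow_mul_one_sub_rpow_mul_log {a : ℝ} (ha : 1 ≤ a) :
    ContinuousOn (fun w => w ^ a * (1 - w) ^ a * log w) (Icc 0 1) := by
  have hcont : Continuous fun w : ℝ => w ^ (a - 1) * (1 - w) ^ a * (w * log w) := by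
    have hmul_log := continuous_mul_log
    fun_prop (disch := linarith)
  refine hcont.continuousOn.congr fun w hw => ?_
  nth_rw 1 [← sub_add_cancel a 1]
  rw [rpow_add_one' hw.1 (by linarith)]
  ring

theorem intervalIntegrable_logBetaIntegrand {a : ℝ} (ha : 1 ≤ a) :
    IntervalIntegrable (logBetaIntegrand a) volume 0 1 := by
  have hcont : Continuous fun v : ℝ => v ^ (a - 1) * (1 - v) ^ (a - 1) * (2 * v - 1) := by
    fun_prop (disch := linarith)
  exact intervalIntegrable_log'.continuousOn_mul hcont.continuousOn

theorem integral_logBetaIntegrand {a : ℝ} (ha : 1 ≤ a) :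
    ∫ v in (0:ℝ)..1, logBetaIntegrand a v = beta a (a + 1) / a := by
  have hq : IntervalIntegrable (fun w : ℝ => w ^ (a - 1) * (1 - w) ^ (a + 1 - 1)) volume 0 1 :=
    (by fun_prop (disch := linarith) : Continuous _).intervalIntegrable 0 1
  have hlog := (intervalIntegrable_logBetaIntegrand ha).const_mul a
  have hFTC := integral_eq_sub_of_hasDerivAt_of_le zero_le_one
    (continuousOn_rpow_mul_one_sub_rpow_mul_log ha)
    (fun w hw => hasDerivAt_rpow_mul_one_sub_rpow_mul_log a hw) (hq.sub hlog)
  rw [integral_sub hq hlog, intervalIntegral.integral_const_mul,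
    integral_rpow_mul_one_sub_rpow_eq_beta (by linarith) (by linarith)] at hFTC
  simp only [one_rpow, sub_self, one_mul, log_one, mul_zero, sub_zero, mul_one, log_zero] at hFTC
  field_simp
  linarith

theorem image_inv_one_add_sq_Ioi : (fun y : ℝ => (1 + y ^ 2)⁻¹) '' Ioi 0 = Ioo 0 1 := by
  ext v
  constructor
  · rintro ⟨y, hy, rfl⟩
    exact ⟨by positivity, inv_lt_one_of_one_lt₀ (by nlinarith [mem_Ioi.1 hy])⟩
  · rintro ⟨hv0, hv1⟩
    have hv : 0 < v⁻¹ - 1 := by linarith [(one_lt_inv₀ hv0).2 hv1]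
    exact ⟨√(v⁻¹ - 1), sqrt_pos.2 hv, by simp [sq_sqrt hv.le]⟩

theorem integral_Ioi_comp_inv_one_add_sq (g : ℝ → ℝ) :
    ∫ y in Ioi (0:ℝ), 2 * y / (1 + y ^ 2) ^ 2 * g (1 + y ^ 2)⁻¹ = ∫ v in (0:ℝ)..1, g v := by
  have hderiv (y : ℝ) (_ : y ∈ Ioi (0:ℝ)) : HasDerivWithinAt (fun y : ℝ => (1 + y ^ 2)⁻¹)
      (-(2 * y) / (1 + y ^ 2) ^ 2) (Ioi 0) y := by
    have h : HasDerivAt (fun y : ℝ => 1 + y ^ 2) (2 * y) y := by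
      simpa using (hasDerivAt_pow 2 y).const_add 1
    exact (h.inv (by positivity)).hasDerivWithinAt
  have hinj : InjOn (fun y : ℝ => (1 + y ^ 2)⁻¹) (Ioi 0) := fun y hy z hz h =>
    (sq_eq_sq₀ hy.out.le hz.out.le).1 (by simpa using h)
  rw [integral_of_le zero_le_one, integral_Ioc_eq_integral_Ioo, ← image_inv_one_add_sq_Ioi,
    integral_image_eq_integral_abs_deriv_smul measurableSet_Ioi hderiv hinj]
  refine setIntegral_congr_fun measurableSet_Ioi fun y (hy : 0 < y) => ?_
  rw [abs_div, abs_neg, abs_of_pos (by positivity : 0 < 2 * y), abs_of_pos (by positivity),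
    smul_eq_mul]

theorem pow_sub_one_mul_log_weight_eq {n : ℕ} (hn : 1 ≤ n) {y : ℝ} (hy : 0 < y) :
    y ^ (n - 1) * ((1 - y ^ 2) / (1 + y ^ 2) ^ (n + 1) * log (1 / (1 + y ^ 2))) =
      2 * y / (1 + y ^ 2) ^ 2 * (logBetaIntegrand (n / 2) (1 + y ^ 2)⁻¹ / 2) := by
  obtain ⟨k, rfl⟩ := Nat.exists_eq_add_of_le' hn
  set s := 1 + y ^ 2 with hs
  have hs0 : 0 < s := by positivity
  have hprod : s⁻¹ * (1 - s⁻¹) = (y / s) ^ (2 : ℝ) := by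
    rw [rpow_two]; field_simp; ring
  have hpow : s⁻¹ ^ (((k + 1 : ℕ) : ℝ) / 2 - 1) * (1 - s⁻¹) ^ (((k + 1 : ℕ) : ℝ) / 2 - 1) =
      (y / s) ^ k / (y / s) := by
    have hs_inv_le : s⁻¹ ≤ 1 := inv_le_one_of_one_le₀ (by simp [hs, sq_nonneg])
    rw [← mul_rpow (by positivity) (sub_nonneg.2 hs_inv_le), hprod, ← rpow_mul (by positivity),
      show (2:ℝ) * (((k + 1 : ℕ) : ℝ) / 2 - 1) = (k : ℝ) - 1 by push_cast; ring,
      rpow_sub_one (by positivity), rpow_natCast]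
  rw [logBetaIntegrand, hpow, Nat.add_sub_cancel, one_div, log_inv, div_pow]
  field_simp
  rw [hs]
  ring

theorem EuclideanSpace.measureReal_ball_zero_one (ι : Type*) [Fintype ι] [Nonempty ι] :
    volume.real (Metric.ball (0 : EuclideanSpace ℝ ι) 1) =
      π ^ ((Fintype.card ι : ℝ) / 2) / Gamma (Fintype.card ι / 2 + 1) := by
  rw [measureReal_def, EuclideanSpace.volume_ball, ENNReal.ofReal_one, one_pow, one_mul,
    ENNReal.toReal_ofReal (by positivity), sqrt_eq_rpow, ← rpow_natCast, ← rpow_mul pi_pos.le]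
  ring_nf

theorem beta_half_half_add_one {x : ℝ} (hx : 0 < x) :
    beta (x / 2) (x / 2 + 1) = Gamma (x / 2) * Gamma (x / 2 + 1) / (x * Gamma x) := by
  rw [beta, show x / 2 + (x / 2 + 1) = x + 1 by ring, Gamma_add_one hx.ne']

/-- `∫_{ℝⁿ} ((1−‖x‖²)/(1+‖x‖²)^{n+1})·log(1/(1+‖x‖²)) dx = π^{n/2}·Γ(n/2)/(n·Γ(n))`
for `n ≥ 3`; in particular this integral is strictly positive. -/
theorem integral_log_weight_eq_and_pos (n : ℕ) (hn : 3 ≤ n) :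
    (∫ x : EuclideanSpace ℝ (Fin n),
        ((1 - ‖x‖ ^ 2) / (1 + ‖x‖ ^ 2) ^ (n + 1)) * Real.log (1 / (1 + ‖x‖ ^ 2))) =
      Real.pi ^ ((n : ℝ) / 2) * Real.Gamma ((n : ℝ) / 2) /
        ((n : ℝ) * Real.Gamma (n : ℝ)) ∧
    0 < ∫ x : EuclideanSpace ℝ (Fin n),
        ((1 - ‖x‖ ^ 2) / (1 + ‖x‖ ^ 2) ^ (n + 1)) * Real.log (1 / (1 + ‖x‖ ^ 2)) := by
  have : Nonempty (Fin n) := ⟨⟨0, by omega⟩⟩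
  have hn0 : (0:ℝ) < n := by exact_mod_cast (by omega : 0 < n)
  have hradial : ∫ y in Ioi (0:ℝ), y ^ (n - 1) •
      ((1 - y ^ 2) / (1 + y ^ 2) ^ (n + 1) * log (1 / (1 + y ^ 2))) =
      beta (n / 2) (n / 2 + 1) / n := by
    simp_rw [smul_eq_mul]
    rw [setIntegral_congr_fun measurableSet_Ioi
        fun y hy => pow_sub_one_mul_log_weight_eq (by omega) hy,
      integral_Ioi_comp_inv_one_add_sq fun v => logBetaIntegrand (n / 2) v / 2,
      intervalIntegral.integral_div,
      integral_logBetaIntegrand (by rw [le_div_iff₀ two_pos]; exact_mod_cast (by omega : 2 ≤ n))]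
    field_simp
  have hvalue : ∫ x : EuclideanSpace ℝ (Fin n),
      ((1 - ‖x‖ ^ 2) / (1 + ‖x‖ ^ 2) ^ (n + 1)) * log (1 / (1 + ‖x‖ ^ 2)) =
      π ^ ((n : ℝ) / 2) * Gamma ((n : ℝ) / 2) / (n * Gamma n) := by
    rw [integral_fun_norm_addHaar volume
      (fun r => (1 - r ^ 2) / (1 + r ^ 2) ^ (n + 1) * log (1 / (1 + r ^ 2))),
      finrank_euclideanSpace_fin, hradial, EuclideanSpace.measureReal_ball_zero_one,
      Fintype.card_fin, beta_half_half_add_one hn0, nsmul_eq_mul, smul_eq_mul]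
    have hΓ := Gamma_pos_of_pos (by positivity : (0:ℝ) < n / 2 + 1)
    field_simp
  exact ⟨hvalue, hvalue ▸ by positivity⟩
end

section
/- For every integer n ≥ 3, ∫_{ℝⁿ} ‖x‖²·(1−‖x‖²)·(1+‖x‖²)^{−(n+1)} dx = −2π^{n/2}·Γ(n/2)/((n−2)·Γ(n)); in particular this integral is strictly negative, so the constant \tilde c₂ = −((n−2)/(4n)) times this integral (appearing in Lemma 5.3 and Theorem 6.3) is strictly positive. (For n = 4 the integral equals −π²/6 = −ω₄/12 and for n = 5 it equals −π³/48, consistent with the value √(3ω₄) and the ratio \tilde c₂/\tilde c₁ = 2/9 computed in the proof of Theorem 6.3.) -/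
/-!
In polar coordinates the integral is `ω_n ∫₀^∞ r^(n+1) (1 - r²) (1 + r²)^(-(n+1)) dr`. The
substitutions `u = r²` and `u = t / (1 - t)` turn `∫₀^∞ r^(2s-1) (1 + r²)^(-(s+v)) dr` into half
the beta integral `B(s, v) = Γ(s) Γ(v) / Γ(s + v)`. Splitting `1 - r²` gives the pairs
`(s, v) = (n/2 + 1, n/2)` and `(n/2 + 2, n/2 - 1)`; the second needs `n > 2`, and the recurrence
`Γ(x + 1) = x Γ(x)` collapses the difference to `-Γ(n/2)² / ((n - 2) Γ(n))`.
-/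

open MeasureTheory Set Real Module

lemma Complex.ofReal_rpow_mul_one_sub_rpow {s v x : ℝ} (hx : x ∈ Ioo (0 : ℝ) 1) :
    ((x ^ (s - 1) * (1 - x) ^ (v - 1) : ℝ) : ℂ) =
      (x : ℂ) ^ ((s : ℂ) - 1) * (1 - (x : ℂ)) ^ ((v : ℂ) - 1) := by
  rw [Complex.ofReal_mul, Complex.ofReal_cpow hx.1.le, Complex.ofReal_cpow (by linarith [hx.2])]
  push_cast
  rfl

lemma Complex.betaIntegral_ofReal (s v : ℝ) :
    betaIntegral s v = ((∫ x in Ioo (0 : ℝ) 1, x ^ (s - 1) * (1 - x) ^ (v - 1) : ℝ) : ℂ) := by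
  rw [betaIntegral, intervalIntegral.integral_of_le zero_le_one, integral_Ioc_eq_integral_Ioo,
    ← integral_complex_ofReal]
  exact setIntegral_congr_fun measurableSet_Ioo fun x hx ↦ (ofReal_rpow_mul_one_sub_rpow hx).symm

lemma integrableOn_Ioo_rpow_mul_one_sub_rpow {s v : ℝ} (hs : 0 < s) (hv : 0 < v) :
    IntegrableOn (fun x : ℝ ↦ x ^ (s - 1) * (1 - x) ^ (v - 1)) (Ioo 0 1) := by
  have h := Complex.betaIntegral_convergent (u := s) (v := v) (by simpa) (by simpa)
  rw [intervalIntegrable_iff_integrableOn_Ioc_of_le zero_le_one] at h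
  refine IntegrableOn.congr_fun (h.mono_set Ioo_subset_Ioc_self).re (fun x hx ↦ ?_)
    measurableSet_Ioo
  rw [← Complex.ofReal_rpow_mul_one_sub_rpow hx, RCLike.re_to_complex, Complex.ofReal_re]

lemma integral_Ioo_rpow_mul_one_sub_rpow {s v : ℝ} (hs : 0 < s) (hv : 0 < v) :
    ∫ x in Ioo (0 : ℝ) 1, x ^ (s - 1) * (1 - x) ^ (v - 1) = Gamma s * Gamma v / Gamma (s + v) := by
  have h := Complex.betaIntegral_eq_Gamma_mul_div s v (by simpa) (by simpa)
  rw [Complex.betaIntegral_ofReal, ← Complex.ofReal_add, Complex.Gamma_ofReal,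
    Complex.Gamma_ofReal, Complex.Gamma_ofReal] at h
  exact_mod_cast h

lemma injOn_div_one_sub : InjOn (fun t : ℝ ↦ t / (1 - t)) {1}ᶜ := by
  intro t ht u hu h
  have ht' : 1 - t ≠ 0 := sub_ne_zero.2 (Ne.symm ht)
  have hu' : 1 - u ≠ 0 := sub_ne_zero.2 (Ne.symm hu)
  simp only [div_eq_div_iff ht' hu'] at h
  linarith

lemma image_div_one_sub_Ioo : (fun t : ℝ ↦ t / (1 - t)) '' Ioo 0 1 = Ioi 0 := by
  refine Subset.antisymm ?_ fun u (hu : 0 < u) ↦ ⟨u / (1 + u), ?_, ?_⟩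
  · rintro _ ⟨t, ⟨ht₀, ht₁⟩, rfl⟩
    exact div_pos ht₀ (sub_pos.2 ht₁)
  · constructor
    · positivity
    · rw [div_lt_one (by positivity)]; linarith
  · have : 1 + u ≠ 0 := by positivity
    field_simp
    ring

lemma hasDerivAt_div_one_sub {t : ℝ} (ht : t ≠ 1) :
    HasDerivAt (fun t : ℝ ↦ t / (1 - t)) ((1 - t) ^ 2)⁻¹ t := by
  have ht' : 1 - t ≠ 0 := sub_ne_zero.2 (Ne.symm ht)
  refine ((hasDerivAt_id' t).div ((hasDerivAt_id' t).const_sub 1) ht').congr_deriv ?_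
  field_simp
  ring

lemma abs_deriv_smul_rpow_div_one_sub {s v t : ℝ} (ht : t ∈ Ioo (0 : ℝ) 1) :
    |((1 - t) ^ 2)⁻¹| • ((t / (1 - t)) ^ (s - 1) * (1 + t / (1 - t)) ^ (-(s + v))) =
      t ^ (s - 1) * (1 - t) ^ (v - 1) := by
  have h₀ : 0 < 1 - t := sub_pos.2 ht.2
  have h₁ : 1 + t / (1 - t) = (1 - t)⁻¹ := by field_simp; ring
  have h₂ : (1 - t) ^ (s + v) = (1 - t) ^ (s - 1) * (1 - t) ^ (v - 1) * (1 - t) ^ 2 := by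
    rw [← rpow_add h₀, ← rpow_natCast, ← rpow_add h₀]
    norm_num
    ring_nf
  rw [h₁, inv_rpow h₀.le, rpow_neg h₀.le, inv_inv, div_rpow ht.1.le h₀.le, h₂, smul_eq_mul,
    abs_of_pos (by positivity)]
  have : (1 - t) ^ (s - 1) ≠ 0 := (rpow_pos_of_pos h₀ _).ne'
  field_simp

lemma integrableOn_Ioi_rpow_mul_one_add_rpow_neg {s v : ℝ} (hs : 0 < s) (hv : 0 < v) :
    IntegrableOn (fun u : ℝ ↦ u ^ (s - 1) * (1 + u) ^ (-(s + v))) (Ioi 0) := by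
  rw [← image_div_one_sub_Ioo,
    integrableOn_image_iff_integrableOn_abs_deriv_smul measurableSet_Ioo
      (fun t ht ↦ (hasDerivAt_div_one_sub ht.2.ne).hasDerivWithinAt)
      (injOn_div_one_sub.mono fun t ht ↦ ht.2.ne)]
  exact (integrableOn_Ioo_rpow_mul_one_sub_rpow hs hv).congr_fun
    (fun t ht ↦ (abs_deriv_smul_rpow_div_one_sub ht).symm) measurableSet_Ioo

lemma integral_Ioi_rpow_mul_one_add_rpow_neg {s v : ℝ} (hs : 0 < s) (hv : 0 < v) :
    ∫ u in Ioi (0 : ℝ), u ^ (s - 1) * (1 + u) ^ (-(s + v)) = Gamma s * Gamma v / Gamma (s + v) := by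
  rw [← image_div_one_sub_Ioo, integral_image_eq_integral_abs_deriv_smul measurableSet_Ioo
    (fun t ht ↦ (hasDerivAt_div_one_sub ht.2.ne).hasDerivWithinAt)
    (injOn_div_one_sub.mono fun t ht ↦ ht.2.ne),
    setIntegral_congr_fun measurableSet_Ioo fun t ht ↦ abs_deriv_smul_rpow_div_one_sub ht,
    integral_Ioo_rpow_mul_one_sub_rpow hs hv]

lemma rpow_two_sub_one_mul_comp_sq {s b x : ℝ} (hx : 0 < x) :
    x ^ ((2 : ℝ) - 1) * ((x ^ (2 : ℝ)) ^ (s - 1) * (1 + x ^ (2 : ℝ)) ^ b) =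
      x ^ (2 * s - 1) * (1 + x ^ 2) ^ b := by
  rw [← rpow_mul hx.le, ← mul_assoc, ← rpow_add hx, rpow_two]
  ring_nf

lemma integrableOn_Ioi_rpow_mul_one_add_sq_rpow_neg {s v : ℝ} (hs : 0 < s) (hv : 0 < v) :
    IntegrableOn (fun r : ℝ ↦ r ^ (2 * s - 1) * (1 + r ^ 2) ^ (-(s + v))) (Ioi 0) := by
  have h := (integrableOn_Ioi_comp_rpow_iff' _ two_ne_zero).2
    (integrableOn_Ioi_rpow_mul_one_add_rpow_neg hs hv)
  exact h.congr_fun (fun r hr ↦ rpow_two_sub_one_mul_comp_sq hr) measurableSet_Ioi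

lemma integral_Ioi_rpow_mul_one_add_sq_rpow_neg {s v : ℝ} (hs : 0 < s) (hv : 0 < v) :
    ∫ r in Ioi (0 : ℝ), r ^ (2 * s - 1) * (1 + r ^ 2) ^ (-(s + v)) =
      Gamma s * Gamma v / (2 * Gamma (s + v)) := by
  have h := integral_comp_rpow_Ioi_of_pos (g := fun u : ℝ ↦ u ^ (s - 1) * (1 + u) ^ (-(s + v)))
    two_pos
  simp only [smul_eq_mul, mul_assoc, integral_Ioi_rpow_mul_one_add_rpow_neg hs hv] at h
  rw [integral_const_mul, setIntegral_congr_fun measurableSet_Ioi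
    fun r hr ↦ rpow_two_sub_one_mul_comp_sq hr] at h
  rw [mul_comm 2 (Gamma _), ← div_div, ← h]
  ring

lemma integral_Ioi_pow_mul_sq_mul_one_sub_sq_mul_one_add_sq_rpow {n : ℕ} (hn : 3 ≤ n) :
    ∫ r in Ioi (0 : ℝ), r ^ (n - 1) • (r ^ 2 * (1 - r ^ 2) * (1 + r ^ 2) ^ (-((n : ℝ) + 1))) =
      -(Gamma ((n : ℝ) / 2) ^ 2 / (((n : ℝ) - 2) * Gamma n)) := by
  have hn' : (3 : ℝ) ≤ n := by exact_mod_cast hn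
  have h₁ : (0 : ℝ) < n / 2 - 1 := by linarith
  have hs₁ : ((n : ℝ) / 2 + 1) + n / 2 = n + 1 := by ring
  have hs₂ : ((n : ℝ) / 2 + 2) + (n / 2 - 1) = n + 1 := by ring
  have hsplit : ∀ r ∈ Ioi (0 : ℝ),
      r ^ (n - 1) • (r ^ 2 * (1 - r ^ 2) * (1 + r ^ 2) ^ (-((n : ℝ) + 1))) =
        r ^ (2 * ((n : ℝ) / 2 + 1) - 1) * (1 + r ^ 2) ^ (-(((n : ℝ) / 2 + 1) + n / 2)) -
        r ^ (2 * ((n : ℝ) / 2 + 2) - 1) * (1 + r ^ 2) ^ (-(((n : ℝ) / 2 + 2) + (n / 2 - 1))) := by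
    intro r _
    have hcast : ((n - 1 : ℕ) : ℝ) = n - 1 := by rw [Nat.cast_sub (by omega), Nat.cast_one]
    have e₁ : 2 * ((n : ℝ) / 2 + 1) - 1 = ((n - 1 + 2 : ℕ) : ℝ) := by push_cast [hcast]; ring
    have e₂ : 2 * ((n : ℝ) / 2 + 2) - 1 = ((n - 1 + 4 : ℕ) : ℝ) := by push_cast [hcast]; ring
    rw [e₁, e₂, rpow_natCast, rpow_natCast, pow_add, pow_add, smul_eq_mul, hs₁, hs₂]
    ring
  rw [setIntegral_congr_fun measurableSet_Ioi hsplit, integral_sub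
    (integrableOn_Ioi_rpow_mul_one_add_sq_rpow_neg (by positivity) (by positivity))
    (integrableOn_Ioi_rpow_mul_one_add_sq_rpow_neg (by positivity) h₁),
    integral_Ioi_rpow_mul_one_add_sq_rpow_neg (by positivity) (by positivity),
    integral_Ioi_rpow_mul_one_add_sq_rpow_neg (by positivity) h₁]
  have hΓ₀ : Gamma ((n : ℝ) / 2) = (n / 2 - 1) * Gamma (n / 2 - 1) := by
    rw [← Gamma_add_one h₁.ne', sub_add_cancel]
  have hΓ₁ : Gamma ((n : ℝ) / 2 + 1) = n / 2 * Gamma (n / 2) := Gamma_add_one (by positivity)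
  have hΓ₂ : Gamma ((n : ℝ) / 2 + 2) = (n / 2 + 1) * Gamma (n / 2 + 1) := by
    rw [← Gamma_add_one (by positivity)]; ring_nf
  have hΓn : Gamma ((n : ℝ) + 1) = n * Gamma n := Gamma_add_one (by positivity)
  have hg : 0 < Gamma ((n : ℝ) / 2 - 1) := Gamma_pos_of_pos h₁
  have hG : 0 < Gamma (n : ℝ) := Gamma_pos_of_pos (by positivity)
  rw [hs₁, hs₂, hΓ₂, hΓ₁, hΓn, hΓ₀]
  have : (n : ℝ) - 2 ≠ 0 := by linarith
  field_simp
  ring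

theorem InnerProductSpace.integral_fun_norm {E F : Type*} [NormedAddCommGroup E]
    [InnerProductSpace ℝ E] [FiniteDimensional ℝ E] [MeasurableSpace E] [BorelSpace E]
    [Nontrivial E] [NormedAddCommGroup F] [NormedSpace ℝ F] (f : ℝ → F) :
    ∫ x : E, f ‖x‖ = (2 * π ^ ((finrank ℝ E : ℝ) / 2) / Gamma ((finrank ℝ E : ℝ) / 2)) •
      ∫ r in Ioi (0 : ℝ), r ^ (finrank ℝ E - 1) • f r := by
  have hd : (0 : ℝ) < finrank ℝ E := Nat.cast_pos.2 finrank_pos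
  have hball : volume.real (Metric.ball (0 : E) 1) =
      π ^ ((finrank ℝ E : ℝ) / 2) / Gamma (finrank ℝ E / 2 + 1) := by
    rw [measureReal_def, volume_ball, ENNReal.ofReal_one, one_pow, one_mul,
      ENNReal.toReal_ofReal (by positivity), sqrt_eq_rpow, ← rpow_natCast, ← rpow_mul pi_pos.le]
    ring_nf
  rw [integral_fun_norm_addHaar, hball, ← Nat.cast_smul_eq_nsmul ℝ, smul_smul,
    Gamma_add_one (by positivity)]
  congr 1
  field_simp

/-- `∫_{ℝⁿ} ‖x‖²·(1−‖x‖²)·(1+‖x‖²)^{−(n+1)} dx = −2π^{n/2}·Γ(n/2)/((n−2)·Γ(n))`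
for `n ≥ 3`; in particular this integral is strictly negative. -/
theorem integral_norm_sq_one_sub_norm_sq_eq_and_neg (n : ℕ) (hn : 3 ≤ n) :
    (∫ x : EuclideanSpace ℝ (Fin n),
        ‖x‖ ^ 2 * (1 - ‖x‖ ^ 2) * (1 + ‖x‖ ^ 2) ^ (-((n : ℝ) + 1))) =
      -(2 * Real.pi ^ ((n : ℝ) / 2) * Real.Gamma ((n : ℝ) / 2) /
        (((n : ℝ) - 2) * Real.Gamma (n : ℝ))) ∧
    (∫ x : EuclideanSpace ℝ (Fin n),
        ‖x‖ ^ 2 * (1 - ‖x‖ ^ 2) * (1 + ‖x‖ ^ 2) ^ (-((n : ℝ) + 1))) < 0 := by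
  have : Nonempty (Fin n) := ⟨⟨0, by omega⟩⟩
  have hn₂ : (0 : ℝ) < n - 2 := by
    rw [sub_pos]
    exact_mod_cast (by omega : 2 < n)
  have hΓ : 0 < Gamma ((n : ℝ) / 2) := Gamma_pos_of_pos (by positivity)
  have hI : (∫ x : EuclideanSpace ℝ (Fin n),
        ‖x‖ ^ 2 * (1 - ‖x‖ ^ 2) * (1 + ‖x‖ ^ 2) ^ (-((n : ℝ) + 1))) =
      -(2 * π ^ ((n : ℝ) / 2) * Gamma ((n : ℝ) / 2) / (((n : ℝ) - 2) * Gamma n)) := by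
    rw [InnerProductSpace.integral_fun_norm
        (fun r : ℝ ↦ r ^ 2 * (1 - r ^ 2) * (1 + r ^ 2) ^ (-((n : ℝ) + 1))),
      finrank_euclideanSpace_fin, integral_Ioi_pow_mul_sq_mul_one_sub_sq_mul_one_add_sq_rpow hn,
      smul_eq_mul]
    field_simp
  refine ⟨hI, hI ▸ neg_neg_of_pos ?_⟩
  have := Gamma_pos_of_pos (by positivity : (0 : ℝ) < n)
  positivity
end

section
/- Let n ≥ 3 be an integer, λ_i, λ_j > 0 and a_i, a_j ∈ ℝⁿ, and set ε = (λ_j/λ_i + λ_i/λ_j + λ_iλ_j‖a_i−a_j‖²)^{(2−n)/2}. Then the derivative of ε with respect to λ_j and the gradient of ε with respect to a_j satisfy the uniform bounds |λ_j·∂_{λ_j}ε| ≤ ((n−2)/2)·ε and (1/λ_j)·‖∇_{a_j}ε‖ ≤ ((n−2)/2)·ε. (This is the flat-metric, quantitative form of Lemma 2.2 (vii): (λ_j∂_{λ_j}, (1/λ_j)∇_{a_j})ε_{i,j} = O(ε_{i,j}).) -/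
/-!
Write `ε = g ^ p` with `g = λⱼ/λᵢ + λᵢ/λⱼ + λᵢλⱼ‖aᵢ - aⱼ‖²` (the interaction base) and
`p = (2 - n)/2`. For any first-order operator `X`, `|X ε| = |p| · ε · |X g| / g`, so it suffices
that `λⱼ ∂_{λⱼ} g` and `λⱼ⁻¹ ∇_{aⱼ} g` are bounded by `g`. The first equals
`λⱼ/λᵢ - λᵢ/λⱼ + λᵢλⱼ‖aᵢ - aⱼ‖²`; the second has norm `2λᵢ‖aᵢ - aⱼ‖ ≤ λᵢ/λⱼ + λᵢλⱼ‖aᵢ - aⱼ‖²`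
by AM–GM.
-/

open Real

section RpowDeriv

variable {E : Type*} [NormedAddCommGroup E] [NormedSpace ℝ E] {p c x : ℝ}

lemma mul_rpow_sub_one_le {y t : ℝ} (hy : 0 < y) (ht : t ≤ y) : y ^ (p - 1) * t ≤ y ^ p := by
  calc y ^ (p - 1) * t ≤ y ^ (p - 1) * y := by gcongr
    _ = y ^ p := by rw [rpow_sub_one hy.ne', div_mul_cancel₀ _ hy.ne']

lemma abs_mul_deriv_rpow_le {f : ℝ → ℝ} {d : ℝ} (hf : HasDerivAt f d x) (hfx : 0 < f x)
    (hbound : |c * d| ≤ f x) : |c * deriv (fun y => f y ^ p) x| ≤ |p| * f x ^ p := by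
  rw [(hf.rpow_const (Or.inl hfx.ne')).deriv]
  calc |c * (d * p * f x ^ (p - 1))| = |p| * (f x ^ (p - 1) * |c * d|) := by
        rw [abs_mul, abs_mul, abs_mul, abs_mul, abs_of_pos (rpow_pos_of_pos hfx _)]; ring
    _ ≤ |p| * f x ^ p := by gcongr; exact mul_rpow_sub_one_le hfx hbound

lemma mul_norm_fderiv_rpow_le {f : E → ℝ} {f' : E →L[ℝ] ℝ} {a : E} (hf : HasFDerivAt f f' a)
    (hfa : 0 < f a) (hbound : c * ‖f'‖ ≤ f a) :
    c * ‖fderiv ℝ (fun y => f y ^ p) a‖ ≤ |p| * f a ^ p := by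
  rw [(hf.rpow_const (Or.inl hfa.ne')).fderiv, norm_smul, norm_mul, Real.norm_eq_abs,
    Real.norm_eq_abs, abs_of_pos (rpow_pos_of_pos hfa _)]
  calc c * (|p| * f a ^ (p - 1) * ‖f'‖) = |p| * (f a ^ (p - 1) * (c * ‖f'‖)) := by ring
    _ ≤ |p| * f a ^ p := by gcongr; exact mul_rpow_sub_one_le hfa hbound

end RpowDeriv

section Interaction

variable {F : Type*} [NormedAddCommGroup F] [InnerProductSpace ℝ F] {li l K : ℝ}

lemma two_mul_mul_le_div_add (hli : 0 < li) (hl : 0 < l) (d : ℝ) :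
    2 * li * d ≤ li / l + li * l * d ^ 2 := by
  have hsq : 0 ≤ li / l * (1 - l * d) ^ 2 := by positivity
  have hexpand : li / l * (1 - l * d) ^ 2 = li / l + li * l * d ^ 2 - 2 * li * d := by
    field_simp; ring
  linarith

lemma hasDerivAt_interaction_base_scale (hl : l ≠ 0) :
    HasDerivAt (fun m : ℝ => m / li + li / m + li * m * K) (1 / li - li / l ^ 2 + li * K) l := by
  have h := (((hasDerivAt_id' l).div_const li).add ((hasDerivAt_inv hl).const_mul li)).add
    (((hasDerivAt_id' l).const_mul li).mul_const K)
  exact h.congr_deriv (by ring)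

lemma abs_mul_interaction_base_deriv_le (hli : 0 < li) (hl : 0 < l) (hK : 0 ≤ K) :
    |l * (1 / li - li / l ^ 2 + li * K)| ≤ l / li + li / l + li * l * K := by
  have hexpand : l * (1 / li - li / l ^ 2 + li * K) = l / li - li / l + li * l * K := by
    field_simp
  have : 0 < l / li := by positivity
  have : 0 < li / l := by positivity
  have : 0 ≤ li * l * K := by positivity
  rw [hexpand, abs_le]
  constructor <;> linarith

lemma hasFDerivAt_const_add_mul_norm_sub_sq (c s : ℝ) (a b : F) :
    HasFDerivAt (fun y : F => c + s * ‖a - y‖ ^ 2) ((-(2 * s)) • innerSL ℝ (a - b)) b := by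
  have h := (((hasFDerivAt_const a b).sub (hasFDerivAt_id b)).norm_sq.const_mul s).const_add c
  refine h.congr_fderiv ?_
  ext v; simp; ring

lemma inv_mul_norm_interaction_base_fderiv_le (hli : 0 < li) (hl : 0 < l) (a b : F) :
    1 / l * ‖(-(2 * (li * l))) • innerSL ℝ (a - b)‖ ≤ l / li + li / l + li * l * ‖a - b‖ ^ 2 := by
  rw [norm_smul, innerSL_apply_norm, norm_neg, Real.norm_of_nonneg (by positivity)]
  calc 1 / l * (2 * (li * l) * ‖a - b‖) = 2 * li * ‖a - b‖ := by field_simp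
    _ ≤ li / l + li * l * ‖a - b‖ ^ 2 := two_mul_mul_le_div_add hli hl _
    _ ≤ l / li + li / l + li * l * ‖a - b‖ ^ 2 := by
      have : 0 < l / li := by positivity
      linarith

end Interaction

/-- For the flat bubble interaction
`ε = (λⱼ/λᵢ + λᵢ/λⱼ + λᵢλⱼ‖aᵢ−aⱼ‖²)^{(2−n)/2}` one has the uniform bounds
`|λⱼ·∂_{λⱼ}ε| ≤ ((n−2)/2)·ε` and `(1/λⱼ)·‖∇_{aⱼ}ε‖ ≤ ((n−2)/2)·ε`. -/
theorem interaction_deriv_bounds (n : ℕ) (hn : 3 ≤ n) (lami lamj : ℝ)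
    (hlami : 0 < lami) (hlamj : 0 < lamj) (ai aj : EuclideanSpace ℝ (Fin n)) :
    DifferentiableAt ℝ
      (fun l : ℝ => (l / lami + lami / l + lami * l * ‖ai - aj‖ ^ 2) ^ ((2 - (n : ℝ)) / 2))
      lamj ∧
    DifferentiableAt ℝ
      (fun b : EuclideanSpace ℝ (Fin n) =>
        (lamj / lami + lami / lamj + lami * lamj * ‖ai - b‖ ^ 2) ^ ((2 - (n : ℝ)) / 2)) aj ∧
    |lamj * deriv
        (fun l : ℝ => (l / lami + lami / l + lami * l * ‖ai - aj‖ ^ 2) ^ ((2 - (n : ℝ)) / 2))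
        lamj| ≤
      (((n : ℝ) - 2) / 2) *
        (lamj / lami + lami / lamj + lami * lamj * ‖ai - aj‖ ^ 2) ^ ((2 - (n : ℝ)) / 2) ∧
    (1 / lamj) * ‖fderiv ℝ
        (fun b : EuclideanSpace ℝ (Fin n) =>
          (lamj / lami + lami / lamj + lami * lamj * ‖ai - b‖ ^ 2) ^ ((2 - (n : ℝ)) / 2))
        aj‖ ≤
      (((n : ℝ) - 2) / 2) *
        (lamj / lami + lami / lamj + lami * lamj * ‖ai - aj‖ ^ 2) ^ ((2 - (n : ℝ)) / 2) := by
  have hexp : |(2 - (n : ℝ)) / 2| = ((n : ℝ) - 2) / 2 := by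
    have : (3 : ℝ) ≤ n := by exact_mod_cast hn
    rw [abs_of_nonpos (by linarith)]
    ring
  have hbase : 0 < lamj / lami + lami / lamj + lami * lamj * ‖ai - aj‖ ^ 2 := by positivity
  have hscale := hasDerivAt_interaction_base_scale (li := lami) (K := ‖ai - aj‖ ^ 2) hlamj.ne'
  have hcenter := hasFDerivAt_const_add_mul_norm_sub_sq (lamj / lami + lami / lamj)
    (lami * lamj) ai aj
  refine ⟨(hscale.rpow_const (Or.inl hbase.ne')).differentiableAt,
    (hcenter.rpow_const (Or.inl hbase.ne')).differentiableAt, ?_, ?_⟩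
  · rw [← hexp]
    exact abs_mul_deriv_rpow_le hscale hbase
      (abs_mul_interaction_base_deriv_le hlami hlamj (sq_nonneg _))
  · rw [← hexp]
    exact mul_norm_fderiv_rpow_le hcenter hbase
      (inv_mul_norm_interaction_base_fderiv_le hlami hlamj ai aj)
end
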